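/- arXiv:math/0411590 — 2 statements merged into one kernel-verified Lean document; each statement's English description precedes it below -/
import Mathlib

section
/- Every configuration stabilizes in finitely many relaxation steps: for all x ∈ ℝ_{≥0}^N, the first time m(x) = min{n ≥ 0 : f^n(x) ∈ [0,E_c]^N} satisfies m(x) ≤ (2dN/(1−ε)) · (‖x‖₁/E_c) · (2d/(1−ε) + 1)^{diam(Λ)/2}. -/
/-!
The weighted mass `W(x) = ∑ᵢ (L² - iₖ²) xᵢ`, whose weights are concave in one coordinate `k`,
is a Lyapunov function for the relaxation map. A toppling at `j` sends `(1 - ε) xⱼ` to the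
neighbours of `j`, whose weights sum to at most `2d wⱼ - 2`; hence each relaxation step of an
unstable configuration lowers `W` by at least `(1 - ε) E_c / d`. As `0 ≤ W(x) ≤ L² ‖x‖₁`,
stabilization takes at most `d L² ‖x‖₁ / ((1 - ε) E_c)` steps, which is within the stated bound
because `L² ≤ 2 Lᵈ (2d / (1 - ε) + 1) ^ (d (L - 1) / 2)`.
-/

open Finset

/-- Sites of the lattice cube `[1,L]^d ⊆ ℤ^d`. -/
abbrev Site (d L : ℕ) := Fin d → Fin L

/-- Manhattan metric on the lattice. -/
def dLam {d L : ℕ} (i j : Site d L) : ℕ :=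
  ∑ n : Fin d, ((i n : ℤ) - (j n : ℤ)).natAbs

/-- Heaviside function: `θ a = 1` if `a > 0`, else `0`. -/
noncomputable def theta (a : ℝ) : ℝ := if 0 < a then 1 else 0

/-- The Zhang relaxation map. -/
noncomputable def zhangF (d L : ℕ) (Ec ε : ℝ) (x : Site d L → ℝ) : Site d L → ℝ :=
  fun i => x i - theta (x i - Ec) * (1 - ε) * x i
    + ((1 - ε) / (2 * d)) * ∑ j ∈ univ.filter (fun j => dLam i j = 1), theta (x j - Ec) * x j

/-- 1-norm of a configuration. -/
noncomputable def norm1 {d L : ℕ} (x : Site d L → ℝ) : ℝ := ∑ i, |x i|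

theorem exists_iterate_of_lyapunov_decrease {α : Type*} {f : α → α} {S : Set α} {P : α → Prop}
    {V : α → ℝ} {δ : ℝ} (hδ : 0 < δ) (hf : Set.MapsTo f S S) (hV : ∀ x ∈ S, 0 ≤ V x)
    (hdec : ∀ x ∈ S, ¬ P x → V (f x) ≤ V x - δ) {x : α} (hx : x ∈ S) :
    ∃ n : ℕ, P (f^[n] x) ∧ n * δ ≤ V x := by
  suffices h : ∀ N : ℕ, ∀ x ∈ S, V x < N * δ → ∃ n : ℕ, P (f^[n] x) ∧ n * δ ≤ V x by
    obtain ⟨N, hN⟩ := exists_nat_gt (V x / δ)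
    exact h N x hx ((div_lt_iff₀ hδ).1 hN)
  intro N
  induction N with
  | zero =>
    intro x hx hlt
    rw [Nat.cast_zero, zero_mul] at hlt
    exact absurd (hV x hx) (not_le.2 hlt)
  | succ N ih =>
    intro x hx hlt
    by_cases hPx : P x
    · exact ⟨0, hPx, by simpa using hV x hx⟩
    have hfx := hdec x hx hPx
    obtain ⟨n, hn, hnV⟩ := ih (f x) (hf hx) (by push_cast at hlt; linarith)
    exact ⟨n + 1, hn, by push_cast; linarith⟩

section Lattice

variable {d L : ℕ}

theorem dLam_comm (i j : Site d L) : dLam i j = dLam j i :=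
  sum_congr rfl fun n _ => by omega

theorem exists_of_dLam_eq_one {i j : Site d L} (h : dLam i j = 1) :
    ∃ n, ((i n : ℤ) - j n).natAbs = 1 ∧ ∀ m ≠ n, i m = j m := by
  obtain ⟨n, -, hn⟩ := exists_ne_zero_of_sum_ne_zero (h ▸ one_ne_zero)
  have hsplit := add_sum_erase univ (fun m => ((i m : ℤ) - j m).natAbs) (mem_univ n)
  unfold dLam at h
  have hrest : ∑ m ∈ univ.erase n, ((i m : ℤ) - j m).natAbs = 0 := by omega
  refine ⟨n, by omega, fun m hm => Fin.ext ?_⟩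
  have : ((i m : ℤ) - j m).natAbs = 0 := sum_eq_zero_iff.1 hrest m (mem_erase.2 ⟨hm, mem_univ m⟩)
  omega

def neighbors (i : Site d L) : Finset (Site d L) := univ.filter fun j => dLam i j = 1

theorem natAbs_sub_eq_one_and_eq_of_mem_neighbors {i j : Site d L} {n : Fin d}
    (hi : i ∈ neighbors j) (hn : i n ≠ j n) :
    ((i n : ℤ) - j n).natAbs = 1 ∧ ∀ m ≠ n, i m = j m := by
  obtain ⟨n₀, habs, hoff⟩ := exists_of_dLam_eq_one ((dLam_comm j i).symm.trans (mem_filter.1 hi).2)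
  obtain rfl : n = n₀ := by_contra fun h => hn (hoff n h)
  exact ⟨habs, hoff⟩

theorem sum_neighbors_eq_sum_sum_filter_ne (j : Site d L) (g : Site d L → ℝ) :
    ∑ i ∈ neighbors j, g i = ∑ n, ∑ i ∈ (neighbors j).filter (fun i => i n ≠ j n), g i := by
  simp_rw [sum_filter]
  rw [sum_comm]
  refine sum_congr rfl fun i hi => ?_
  obtain ⟨n, habs, hoff⟩ := exists_of_dLam_eq_one ((dLam_comm j i).symm.trans (mem_filter.1 hi).2)
  rw [sum_eq_single n (fun m _ hm => if_neg (not_not.2 (hoff m hm))) (by simp)]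
  exact (if_pos fun h => by simp [h] at habs).symm

theorem sum_neighbors_filter_ne_le (j : Site d L) (n : Fin d) {g : Site d L → ℝ} {G : ℤ → ℝ}
    (hG₁ : 0 ≤ G (-1)) (hG₂ : 0 ≤ G 1)
    (hg : ∀ i ∈ neighbors j, i n ≠ j n → g i = G ((i n : ℤ) - j n)) :
    ∑ i ∈ (neighbors j).filter (fun i => i n ≠ j n), g i ≤ G (-1) + G 1 := by
  set F := (neighbors j).filter (fun i => i n ≠ j n)
  have hinj : Set.InjOn (fun i : Site d L => (i n : ℤ) - j n) F := by
    intro a ha b hb hab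
    obtain ⟨ha, han⟩ := mem_filter.1 ha
    obtain ⟨hb, hbn⟩ := mem_filter.1 hb
    funext m
    by_cases hm : m = n
    · subst hm; exact Fin.ext (by simp only at hab; omega)
    · rw [(natAbs_sub_eq_one_and_eq_of_mem_neighbors ha han).2 m hm,
        (natAbs_sub_eq_one_and_eq_of_mem_neighbors hb hbn).2 m hm]
  have himage : F.image (fun i : Site d L => (i n : ℤ) - j n) ⊆ {-1, 1} := by
    intro s hs
    obtain ⟨i, hi, rfl⟩ := mem_image.1 hs
    obtain ⟨hi, hin⟩ := mem_filter.1 hi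
    have := (natAbs_sub_eq_one_and_eq_of_mem_neighbors hi hin).1
    simp only [mem_insert, mem_singleton]
    omega
  calc ∑ i ∈ F, g i = ∑ i ∈ F, G ((i n : ℤ) - j n) :=
        sum_congr rfl fun i hi => hg i (mem_filter.1 hi).1 (mem_filter.1 hi).2
    _ = ∑ s ∈ F.image (fun i : Site d L => (i n : ℤ) - j n), G s := (sum_image hinj).symm
    _ ≤ ∑ s ∈ ({-1, 1} : Finset ℤ), G s :=
        sum_le_sum_of_subset_of_nonneg himage (by simp [hG₁, hG₂])
    _ = G (-1) + G 1 := sum_pair (by norm_num)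

end Lattice

section Weight

variable {d L : ℕ} (k : Fin d)

def weight (i : Site d L) : ℝ := (L : ℝ) ^ 2 - ((i k : ℕ) : ℝ) ^ 2

theorem weight_nonneg (i : Site d L) : 0 ≤ weight k i := by
  have : ((i k : ℕ) : ℝ) ≤ L := by exact_mod_cast (i k).isLt.le
  unfold weight
  nlinarith [(i k : ℕ).cast_nonneg (α := ℝ)]

theorem weight_le (i : Site d L) : weight k i ≤ (L : ℝ) ^ 2 := by
  unfold weight
  nlinarith [sq_nonneg ((i k : ℕ) : ℝ)]

theorem sum_neighbors_weight_le (j : Site d L) :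
    ∑ i ∈ neighbors j, weight k i ≤ 2 * d * weight k j - 2 := by
  have ht : ((j k : ℕ) : ℝ) + 1 ≤ L := by exact_mod_cast (j k).isLt
  have ht₀ : 0 ≤ ((j k : ℕ) : ℝ) := Nat.cast_nonneg _
  set t : ℝ := ((j k : ℕ) : ℝ)
  -- `G n s` is the weight of the neighbour `j + s • eₙ`
  let G (n : Fin d) (s : ℤ) : ℝ := (L : ℝ) ^ 2 - (t + if n = k then (s : ℝ) else 0) ^ 2
  have hG : ∀ n, ∑ i ∈ (neighbors j).filter (fun i => i n ≠ j n), weight k i ≤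
      G n (-1) + G n 1 := by
    intro n
    refine sum_neighbors_filter_ne_le j n ?_ ?_ fun i hi hin => ?_
    · dsimp only [G]; split_ifs <;> push_cast <;> nlinarith
    · dsimp only [G]; split_ifs <;> push_cast <;> nlinarith
    · dsimp only [G, weight]
      split_ifs with hnk
      · subst hnk; push_cast; ring
      · rw [(natAbs_sub_eq_one_and_eq_of_mem_neighbors hi hin).2 k (Ne.symm hnk)]; simp [t]
  calc ∑ i ∈ neighbors j, weight k i ≤ ∑ n, (G n (-1) + G n 1) := by
        rw [sum_neighbors_eq_sum_sum_filter_ne]; exact sum_le_sum fun n _ => hG n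
    _ = ∑ n : Fin d, (2 * weight k j - if n = k then 2 else 0) := by
        refine sum_congr rfl fun n _ => ?_
        dsimp only [G, weight]
        split_ifs <;> push_cast <;> ring
    _ = 2 * d * weight k j - 2 := by
        rw [sum_sub_distrib, sum_ite_eq']
        simp only [sum_const, card_univ, Fintype.card_fin, nsmul_eq_mul, mem_univ, ↓reduceIte]
        ring

end Weight

section Dynamics

variable {d L : ℕ} {Ec ε : ℝ}

theorem theta_nonneg (a : ℝ) : 0 ≤ theta a := by
  unfold theta; split_ifs <;> norm_num

theorem theta_le_one (a : ℝ) : theta a ≤ 1 := by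
  unfold theta; split_ifs <;> norm_num

theorem zhangF_nonneg (hε0 : 0 ≤ ε) (hε1 : ε ≤ 1) {x : Site d L → ℝ} (hx : ∀ i, 0 ≤ x i)
    (i : Site d L) : 0 ≤ zhangF d L Ec ε x i := by
  have hθ : theta (x i - Ec) * (1 - ε) ≤ 1 :=
    mul_le_one₀ (theta_le_one _) (by linarith) (by linarith)
  have hloss : theta (x i - Ec) * (1 - ε) * x i ≤ x i := by
    simpa using mul_le_mul_of_nonneg_right hθ (hx i)
  have hgain : 0 ≤ (1 - ε) / (2 * d) *
      ∑ j ∈ univ.filter (fun j => dLam i j = 1), theta (x j - Ec) * x j :=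
    mul_nonneg (div_nonneg (by linarith) (by positivity))
      (sum_nonneg fun j _ => mul_nonneg (theta_nonneg _) (hx j))
  unfold zhangF
  linarith

variable (k : Fin d)

def potential (x : Site d L → ℝ) : ℝ := ∑ i, weight k i * x i

theorem potential_nonneg {x : Site d L → ℝ} (hx : ∀ i, 0 ≤ x i) : 0 ≤ potential k x :=
  sum_nonneg fun i _ => mul_nonneg (weight_nonneg k i) (hx i)

theorem potential_le {x : Site d L → ℝ} (hx : ∀ i, 0 ≤ x i) :
    potential k x ≤ (L : ℝ) ^ 2 * norm1 x := by
  rw [potential, norm1, mul_sum]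
  refine sum_le_sum fun i _ => ?_
  rw [abs_of_nonneg (hx i)]
  exact mul_le_mul_of_nonneg_right (weight_le k i) (hx i)

theorem potential_zhangF_le (hε1 : ε ≤ 1) {x : Site d L → ℝ} (hx : ∀ i, 0 ≤ x i) :
    potential k (zhangF d L Ec ε x) ≤
      potential k x - (1 - ε) / d * ∑ j, theta (x j - Ec) * x j := by
  set T : Site d L → ℝ := fun j => theta (x j - Ec) * x j
  have hT : ∀ j, 0 ≤ T j := fun j => mul_nonneg (theta_nonneg _) (hx j)
  have hd : (0 : ℝ) < d := by exact_mod_cast k.pos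
  set c : ℝ := (1 - ε) / (2 * d)
  have hswap : ∑ i, weight k i * ∑ j ∈ neighbors i, T j =
      ∑ j, (∑ i ∈ neighbors j, weight k i) * T j := by
    simp_rw [mul_sum, sum_mul]
    exact sum_comm' fun i j => by simp [neighbors, dLam_comm i j]
  have hsite : ∀ j, c * (∑ i ∈ neighbors j, weight k i) * T j - (1 - ε) * weight k j * T j ≤
      -((1 - ε) / d) * T j := by
    intro j
    have hc : 0 ≤ c := div_nonneg (by linarith) (by positivity)
    have := mul_le_mul_of_nonneg_left (sum_neighbors_weight_le k j) hc
    have hcj : c * (2 * d * weight k j - 2) = (1 - ε) * weight k j - (1 - ε) / d := by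
      simp only [c]; field_simp
    nlinarith [hT j]
  calc potential k (zhangF d L Ec ε x)
      = potential k x + ∑ j, (c * (∑ i ∈ neighbors j, weight k i) * T j
          - (1 - ε) * weight k j * T j) := by
        have hexpand : ∀ i, weight k i * zhangF d L Ec ε x i = weight k i * x i
            - (1 - ε) * weight k i * T i + c * (weight k i * ∑ j ∈ neighbors i, T j) := by
          intro i; simp only [zhangF, T, c, neighbors]; ring
        rw [potential, sum_congr rfl fun i _ => hexpand i, sum_add_distrib, sum_sub_distrib,
          ← mul_sum, hswap, potential, sum_sub_distrib, mul_sum]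
        simp only [mul_assoc]
        ring
    _ ≤ potential k x + ∑ j, -((1 - ε) / d) * T j := by gcongr with j; exact hsite j
    _ = potential k x - (1 - ε) / d * ∑ j, T j := by rw [← mul_sum]; ring

theorem potential_zhangF_le_sub (hε1 : ε ≤ 1) {x : Site d L → ℝ} (hx : ∀ i, 0 ≤ x i)
    (hunstable : ¬ ∀ i, x i ≤ Ec) :
    potential k (zhangF d L Ec ε x) ≤ potential k x - (1 - ε) * Ec / d := by
  obtain ⟨j, hj⟩ := not_forall.1 hunstable
  rw [not_le] at hj
  have hsum : Ec ≤ ∑ i, theta (x i - Ec) * x i := by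
    refine le_trans ?_ (single_le_sum (fun i _ => mul_nonneg (theta_nonneg _) (hx i)) (mem_univ j))
    simp [theta, hj, hj.le]
  have hcoef : 0 ≤ (1 - ε) / d := div_nonneg (by linarith) (Nat.cast_nonneg d)
  calc potential k (zhangF d L Ec ε x)
      ≤ potential k x - (1 - ε) / d * ∑ i, theta (x i - Ec) * x i := potential_zhangF_le k hε1 hx
    _ ≤ potential k x - (1 - ε) / d * Ec := by gcongr
    _ = potential k x - (1 - ε) * Ec / d := by ring

end Dynamics

theorem one_add_half_le_rpow {β : ℝ} (hβ : 3 ≤ β) (m : ℕ) : 1 + m / 2 ≤ β ^ ((m : ℝ) / 2) := by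
  have hsqrt : β ^ ((m : ℝ) / 2) = √β ^ m := by
    rw [Real.sqrt_eq_rpow, ← Real.rpow_natCast, ← Real.rpow_mul (by linarith)]
    ring_nf
  have h32 : 3 / 2 ≤ √β := Real.le_sqrt_of_sq_le (by linarith)
  calc 1 + m / 2 = 1 + m * (1 / 2 : ℝ) := by ring
    _ ≤ (1 + 1 / 2) ^ m := one_add_mul_le_pow (by norm_num) m
    _ ≤ √β ^ m := pow_le_pow_left₀ (by norm_num) (by linarith) m
    _ = β ^ ((m : ℝ) / 2) := hsqrt.symm

theorem sq_le_two_mul_pow_mul_rpow {d : ℕ} (hd : 0 < d) (L : ℕ) {β : ℝ} (hβ : 3 ≤ β) :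
    (L : ℝ) ^ 2 ≤ 2 * (L ^ d : ℕ) * β ^ (((d * (L - 1) : ℕ) : ℝ) / 2) := by
  have hL : (L : ℝ) ≤ (L ^ d : ℕ) := by exact_mod_cast Nat.le_self_pow hd.ne' L
  have hm : (L : ℝ) - 1 ≤ (L - 1 : ℕ) := by
    rcases Nat.eq_zero_or_pos L with rfl | hL0
    · simp
    · rw [Nat.cast_sub hL0]; simp
  have hexp : ((L - 1 : ℕ) : ℝ) / 2 ≤ ((d * (L - 1) : ℕ) : ℝ) / 2 := by
    gcongr; exact_mod_cast Nat.le_mul_of_pos_left _ hd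
  have hpow : ((L : ℝ) + 1) / 2 ≤ β ^ (((d * (L - 1) : ℕ) : ℝ) / 2) :=
    calc ((L : ℝ) + 1) / 2 ≤ 1 + ((L - 1 : ℕ) : ℝ) / 2 := by linarith
      _ ≤ β ^ (((L - 1 : ℕ) : ℝ) / 2) := one_add_half_le_rpow hβ _
      _ ≤ _ := Real.rpow_le_rpow_of_exponent_le (by linarith) hexp
  have hL0 : (0 : ℝ) ≤ L := Nat.cast_nonneg L
  nlinarith [mul_le_mul hL hpow (by positivity) (by positivity)]

theorem zhang_stabilization_time_general
    (d L : ℕ) (hd : 0 < d)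
    (Ec ε : ℝ) (hEc : 0 < Ec) (hε0 : 0 ≤ ε) (hε1 : ε < 1)
    (x : Site d L → ℝ) (hx : ∀ i, 0 ≤ x i) :
    ∃ n : ℕ, (∀ i, (zhangF d L Ec ε)^[n] x i ≤ Ec) ∧
      (n : ℝ) ≤ (2 * d * (L ^ d : ℕ) / (1 - ε)) * (norm1 x / Ec) *
        (2 * d / (1 - ε) + 1) ^ (((d * (L - 1) : ℕ) : ℝ) / 2) := by
  let k : Fin d := ⟨0, hd⟩
  have hd' : (0 : ℝ) < d := by exact_mod_cast hd
  have hδ : 0 < (1 - ε) * Ec / d := div_pos (mul_pos (by linarith) hEc) hd'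
  obtain ⟨n, hstable, hn⟩ := exists_iterate_of_lyapunov_decrease (f := zhangF d L Ec ε)
    (S := {y : Site d L → ℝ | ∀ i, 0 ≤ y i}) hδ
    (fun y hy => zhangF_nonneg hε0 hε1.le hy) (fun y hy => potential_nonneg k hy)
    (fun y hy hy' => potential_zhangF_le_sub k hε1.le hy hy') hx
  refine ⟨n, hstable, ?_⟩
  have hβ : 3 ≤ 2 * (d : ℝ) / (1 - ε) + 1 := by
    have : 2 ≤ 2 * (d : ℝ) / (1 - ε) := by
      rw [le_div_iff₀ (by linarith)]
      nlinarith [show (1 : ℝ) ≤ d by exact_mod_cast hd]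
    linarith
  calc (n : ℝ) ≤ potential k x / ((1 - ε) * Ec / d) := (le_div_iff₀ hδ).2 hn
    _ ≤ (L : ℝ) ^ 2 * norm1 x / ((1 - ε) * Ec / d) := by gcongr; exact potential_le k hx
    _ = d / (1 - ε) * (norm1 x / Ec) * (L : ℝ) ^ 2 := by field_simp
    _ ≤ d / (1 - ε) * (norm1 x / Ec) * (2 * (L ^ d : ℕ) *
          (2 * d / (1 - ε) + 1) ^ (((d * (L - 1) : ℕ) : ℝ) / 2)) :=
        mul_le_mul_of_nonneg_left (sq_le_two_mul_pow_mul_rpow hd L hβ) <| mul_nonneg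
          (div_nonneg hd'.le (by linarith)) (div_nonneg (sum_nonneg fun i _ => abs_nonneg _) hEc.le)
    _ = _ := by ring

theorem zhang_stabilization_time
    (d L : ℕ) (hd : 0 < d) (hL : 0 < L)
    (Ec ε : ℝ) (hEc : 0 < Ec) (hε0 : 0 ≤ ε) (hε1 : ε < 1)
    (x : Site d L → ℝ) (hx : ∀ i, 0 ≤ x i) :
    ∃ n : ℕ, (∀ i, (zhangF d L Ec ε)^[n] x i ≤ Ec) ∧
      (n : ℝ) ≤ (2 * d * (L ^ d : ℕ) / (1 - ε)) * (norm1 x / Ec) *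
        (2 * d / (1 - ε) + 1) ^ (((d * (L - 1) : ℕ) : ℝ) / 2) :=
  zhang_stabilization_time_general d L hd Ec ε hEc hε0 hε1 x hx
end

section
/- If E_c ≥ ε/(1−ε) with ε ∈ (0,1), then for every configuration x occurring during an avalanche, det S(x) = ε^{ρ(x)}, where ρ(x) is the number of overcritical sites of x. Consequently the linear part L_{ij} of each avalanche map satisfies det L_{ij} = ε^{s_{ij}}, where s_{ij} is the avalanche size (total number of overcritical-site events). -/
open Finset

open Matrix

/-- The matrix `Q(x)`. -/
noncomputable def Qmat (d L : ℕ) (Ec : ℝ) (x : Site d L → ℝ) :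
    Matrix (Site d L) (Site d L) ℝ :=
  fun k l => if dLam k l = 1 then (1 / (2 * d)) * theta (x l - Ec) else 0

/-- The diagonal matrix `J(x)`. -/
noncomputable def Jmat (d L : ℕ) (Ec ε : ℝ) (x : Site d L → ℝ) :
    Matrix (Site d L) (Site d L) ℝ :=
  Matrix.diagonal (fun l => 1 - (1 - ε) * theta (x l - Ec))

/-- The one-step relaxation matrix `S(x) = J(x) + (1-ε) Q(x)`. -/
noncomputable def Smat (d L : ℕ) (Ec ε : ℝ) (x : Site d L → ℝ) :
    Matrix (Site d L) (Site d L) ℝ :=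
  Jmat d L Ec ε x + (1 - ε) • Qmat d L Ec x

/-- `ρ(x)`: the number of overcritical sites of the configuration `x`. -/
noncomputable def rhoCount (d L : ℕ) (Ec : ℝ) (x : Site d L → ℝ) : ℕ :=
  (Finset.univ.filter (fun i : Site d L => Ec < x i)).card

/-!
Colour the lattice as a checkerboard. Along the avalanche started by adding one unit to a stable
configuration (`x ≤ Ec`), all overcritical sites of the `n`-th configuration have the colour of the
seed shifted by `n`, and every energy stays below `Ec / ε`: a toppling site keeps `ε y ≤ Ec`, a
site fed by its at most `2d` overcritical neighbours gains at most `(1 - ε) Ec / ε`, and the seed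
starts below `Ec + 1 ≤ Ec / ε`, which is the hypothesis `ε / (1 - ε) ≤ Ec`. Hence no two
overcritical sites are adjacent, so the columns of `S` at relaxed sites are unit vectors while the
block of `S` on the overcritical sites is `ε • 1`; this gives `det S = ε ^ ρ`, and `det L = ε ^ s`
by multiplicativity of the determinant.
-/

lemma theta_sub_mul_self (a c : ℝ) : theta (a - c) * a = if c < a then a else 0 := by
  simp only [theta, sub_pos, ite_mul, one_mul, zero_mul]

def checkerboard {d L : ℕ} (j : Site d L) : ZMod 2 := ∑ n, ((j n : ℤ) : ZMod 2)

lemma checkerboard_ne_of_dLam_eq_one {d L : ℕ} {k l : Site d L} (h : dLam k l = 1) :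
    checkerboard k ≠ checkerboard l := by
  intro he
  have hpar : ((dLam k l : ℕ) : ZMod 2) = checkerboard k - checkerboard l := by
    simp only [dLam, checkerboard, Nat.cast_sum, ZMod.natAbs_mod_two, Int.cast_sub, sum_sub_distrib]
  rw [h, he, sub_self, Nat.cast_one] at hpar
  exact one_ne_zero hpar

lemma exists_eq_single_of_sum_natAbs_eq_one {ι : Type*} [Fintype ι] [DecidableEq ι] {δ : ι → ℤ}
    (h : ∑ n, (δ n).natAbs = 1) : ∃ n, (δ n).natAbs = 1 ∧ δ = Pi.single n (δ n) := by
  obtain ⟨n, hn⟩ : ∃ n, (δ n).natAbs ≠ 0 := by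
    by_contra! h0
    simp [h0] at h
  have hsplit := add_sum_erase univ (fun m => (δ m).natAbs) (mem_univ n)
  have hrest0 : ∑ m ∈ univ.erase n, (δ m).natAbs = 0 := by omega
  have hrest : ∀ m ≠ n, δ m = 0 := fun m hm =>
    Int.natAbs_eq_zero.mp (sum_eq_zero_iff.mp hrest0 m (mem_erase.2 ⟨hm, mem_univ m⟩))
  refine ⟨n, by omega, funext fun m => ?_⟩
  by_cases hm : m = n
  · subst hm; simp
  · simp [hm, hrest m hm]

lemma card_filter_dLam_eq_one_le {d L : ℕ} (j : Site d L) : #{l | dLam j l = 1} ≤ 2 * d := by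
  classical
  set δ : Site d L → Fin d → ℤ := fun l n => (j n : ℤ) - l n
  have hδ : Function.Injective δ := fun l l' h => funext fun n => Fin.ext <| by
    have := congrFun h n
    simp only [δ] at this
    omega
  have hsub : ({l | dLam j l = 1} : Finset (Site d L)).image δ ⊆
      (univ ×ˢ {1, -1}).image fun p : Fin d × ℤ => Pi.single p.1 p.2 := by
    intro v hv
    obtain ⟨l, hl, rfl⟩ := mem_image.mp hv
    obtain ⟨n, hn1, hn⟩ := exists_eq_single_of_sum_natAbs_eq_one (δ := δ l) (mem_filter.mp hl).2
    exact mem_image.mpr ⟨(n, δ l n), by simpa using Int.natAbs_eq_iff.mp hn1, hn.symm⟩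
  calc #{l | dLam j l = 1} = #(({l | dLam j l = 1} : Finset (Site d L)).image δ) :=
        (card_image_of_injective _ hδ).symm
    _ ≤ #(univ ×ˢ ({1, -1} : Finset ℤ)) := (card_le_card hsub).trans card_image_le
    _ = 2 * d := by simp [mul_comm]

section Relaxation

variable {d L : ℕ} {Ec ε : ℝ}

lemma zhangF_apply (y : Site d L → ℝ) (j : Site d L) :
    zhangF d L Ec ε y j = (if Ec < y j then ε * y j else y j)
      + (1 - ε) / (2 * d) * ∑ l ∈ {l | dLam j l = 1}, if Ec < y l then y l else 0 := by
  simp only [zhangF, theta_sub_mul_self]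
  simp only [theta, sub_pos]
  split_ifs <;> ring

lemma Smat_apply (y : Site d L → ℝ) (k l : Site d L) :
    Smat d L Ec ε y k l = if Ec < y l
      then (if k = l then ε else if dLam k l = 1 then (1 - ε) / (2 * d) else 0)
      else (if k = l then 1 else 0) := by
  have hself : dLam l l = 0 := by simp [dLam]
  simp only [Smat, Jmat, Qmat, Matrix.add_apply, Matrix.smul_apply, diagonal_apply, theta, sub_pos,
    smul_eq_mul]
  split_ifs <;> simp_all [div_eq_mul_inv, mul_comm]

theorem det_Smat_of_not_adjacent {y : Site d L → ℝ}
    (hy : ∀ k l, dLam k l = 1 → Ec < y k → Ec < y l → False) :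
    (Smat d L Ec ε y).det = ε ^ rhoCount d L Ec y := by
  have hover : toSquareBlockProp (Smat d L Ec ε y) (fun l => Ec < y l) =
      diagonal fun _ => ε := by
    ext ⟨k, hk⟩ ⟨l, hl⟩
    have hnot_adj := hy k l
    simp only [toSquareBlockProp_def, Smat_apply, diagonal_apply, Subtype.mk.injEq]
    split_ifs <;> simp_all
  have hunder : toSquareBlockProp (Smat d L Ec ε y) (fun l => ¬ Ec < y l) = 1 := by
    ext ⟨k, hk⟩ ⟨l, hl⟩
    simp [toSquareBlockProp_def, Smat_apply, hl, one_apply]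
  rw [twoBlockTriangular_det' _ (fun l => Ec < y l), hover, hunder, det_one, mul_one,
    det_diagonal, prod_const, card_univ, Fintype.card_subtype, rhoCount]
  intro k hk l hl
  rw [Smat_apply, if_neg hl, if_neg (by rintro rfl; exact hl hk)]

def IsAvalancheState (Ec ε : ℝ) (c : ZMod 2) (y : Site d L → ℝ) : Prop :=
  ∀ j, y j ≤ Ec / ε ∧ (Ec < y j → checkerboard j = c)

variable {c : ZMod 2} {y : Site d L → ℝ}

lemma IsAvalancheState.not_adjacent (h : IsAvalancheState Ec ε c y) (k l : Site d L)
    (hkl : dLam k l = 1) (hk : Ec < y k) (hl : Ec < y l) : False :=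
  checkerboard_ne_of_dLam_eq_one hkl (((h k).2 hk).trans ((h l).2 hl).symm)

lemma IsAvalancheState.received_le (h : IsAvalancheState Ec ε c y) (hEc : 0 ≤ Ec) (hε0 : 0 < ε)
    (hε1 : ε ≤ 1) (j : Site d L) :
    (1 - ε) / (2 * d) * ∑ l ∈ {l | dLam j l = 1}, (if Ec < y l then y l else 0)
      ≤ (1 - ε) * (Ec / ε) := by
  have hbound : 0 ≤ Ec / ε := div_nonneg hEc hε0.le
  have hsum : ∑ l ∈ {l | dLam j l = 1}, (if Ec < y l then y l else 0) ≤ 2 * d * (Ec / ε) :=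
    calc _ ≤ #{l | dLam j l = 1} • (Ec / ε) :=
          sum_le_card_nsmul _ _ _ fun l _ => by split_ifs; exacts [(h l).1, hbound]
      _ ≤ 2 * d * (Ec / ε) := by
          rw [nsmul_eq_mul]
          gcongr
          exact_mod_cast card_filter_dLam_eq_one_le j
  calc _ ≤ (1 - ε) / (2 * d) * (2 * d * (Ec / ε)) := by
        gcongr
    _ ≤ (1 - ε) * (Ec / ε) := by
        obtain rfl | hd := d.eq_zero_or_pos
        · simp only [CharP.cast_eq_zero, mul_zero, div_zero, zero_mul]
          exact mul_nonneg (by linarith) hbound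
        · field_simp
          exact le_rfl

theorem IsAvalancheState.map_zhangF (h : IsAvalancheState Ec ε c y) (hEc : 0 ≤ Ec) (hε0 : 0 < ε)
    (hε1 : ε ≤ 1) : IsAvalancheState Ec ε (c + 1) (zhangF d L Ec ε y) := by
  have hEcε : Ec ≤ Ec / ε := le_div_self hEc hε0 hε1
  intro j
  rw [zhangF_apply]
  by_cases hj : Ec < y j
  · have hquiet : ∑ l ∈ {l | dLam j l = 1}, (if Ec < y l then y l else 0) = 0 :=
      sum_eq_zero fun l hl => if_neg fun hl' => h.not_adjacent j l (mem_filter.mp hl).2 hj hl'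
    have hrelaxed : ε * y j ≤ Ec := (le_div_iff₀' hε0).mp (h j).1
    rw [if_pos hj, hquiet, mul_zero, add_zero]
    exact ⟨hrelaxed.trans hEcε, fun h' => absurd hrelaxed (not_le.2 h')⟩
  rw [if_neg hj]
  refine ⟨?_, fun hover => ?_⟩
  · calc _ ≤ Ec + (1 - ε) * (Ec / ε) := add_le_add (not_lt.1 hj) (h.received_le hEc hε0 hε1 j)
      _ = Ec / ε := by field_simp; ring
  · obtain ⟨l, hl, hne⟩ := exists_ne_zero_of_sum_ne_zero fun h0 => by
      rw [h0, mul_zero, add_zero] at hover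
      exact hj hover
    have hl' : Ec < y l := by
      by_contra hl'
      exact hne (if_neg hl')
    have hpar := checkerboard_ne_of_dLam_eq_one (mem_filter.mp hl).2
    rw [(h l).2 hl'] at hpar
    have hZMod2 : ∀ a b : ZMod 2, a ≠ b → a = b + 1 := by decide
    exact hZMod2 _ _ hpar

theorem IsAvalancheState.iterate_zhangF (h : IsAvalancheState Ec ε c y) (hEc : 0 ≤ Ec)
    (hε0 : 0 < ε) (hε1 : ε ≤ 1) (n : ℕ) :
    IsAvalancheState Ec ε (c + n) ((zhangF d L Ec ε)^[n] y) := by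
  induction n with
  | zero => simpa using h
  | succ n ih =>
    rw [Function.iterate_succ_apply', Nat.cast_succ, ← add_assoc]
    exact ih.map_zhangF hEc hε0 hε1

lemma isAvalancheState_add_single (hε0 : 0 < ε) (hε1 : ε < 1) (hE : ε / (1 - ε) ≤ Ec)
    {x : Site d L → ℝ} (hxM : ∀ j, x j ≤ Ec) (i : Site d L) :
    IsAvalancheState Ec ε (checkerboard i) (fun j => x j + if j = i then 1 else 0) := by
  have hEc1 : Ec + 1 ≤ Ec / ε := by
    rw [le_div_iff₀ hε0]
    rw [div_le_iff₀ (sub_pos.2 hε1)] at hE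
    linarith
  intro j
  by_cases hji : j = i
  · subst hji
    simpa using (by linarith [hxM j] : x j + 1 ≤ Ec / ε)
  · simp only [hji, if_false, add_zero]
    exact ⟨(hxM j).trans (by linarith), fun h => absurd (hxM j) (not_le.2 h)⟩

end Relaxation

lemma det_list_prod_map_range {n R : Type*} [Fintype n] [DecidableEq n] [CommRing R]
    (f : ℕ → Matrix n n R) (τ : ℕ) :
    ((List.range τ).map f).prod.det = ∏ t ∈ range τ, (f t).det := by
  induction τ with
  | zero => simp
  | succ τ ih => simp [List.range_succ, prod_range_succ, ih]

theorem zhang_det_S_eq_eps_pow_general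
    (d L : ℕ)
    (Ec ε : ℝ) (hε0 : 0 < ε) (hε1 : ε < 1)
    (hE : ε / (1 - ε) ≤ Ec)
    (x : Site d L → ℝ) (hxM : ∀ i, x i ≤ Ec)
    (i : Site d L) :
    let y : Site d L → ℝ := fun j => x j + if j = i then 1 else 0
    (∀ n, ((Smat d L Ec ε ((zhangF d L Ec ε)^[n] y)).det
        = ε ^ rhoCount d L Ec ((zhangF d L Ec ε)^[n] y))) ∧
      (∀ τ : ℕ,
        (((List.range τ).map (fun t => Smat d L Ec ε ((zhangF d L Ec ε)^[t] y))).prod).det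
          = ε ^ (∑ t ∈ Finset.range τ, rhoCount d L Ec ((zhangF d L Ec ε)^[t] y))) := by
  intro y
  have hEc : 0 ≤ Ec := le_trans (div_nonneg hε0.le (sub_pos.2 hε1).le) hE
  have hy : IsAvalancheState Ec ε (checkerboard i) y := isAvalancheState_add_single hε0 hε1 hE hxM i
  have hdet (n : ℕ) := det_Smat_of_not_adjacent (ε := ε)
    (hy.iterate_zhangF hEc hε0 hε1.le n).not_adjacent
  refine ⟨hdet, fun τ => ?_⟩
  rw [det_list_prod_map_range]
  simp only [hdet, prod_pow_eq_pow_sum]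

theorem zhang_det_S_eq_eps_pow
    (d L : ℕ) (hd : 0 < d) (hL : 0 < L)
    (Ec ε : ℝ) (hEc : 0 < Ec) (hε0 : 0 < ε) (hε1 : ε < 1)
    (hE : ε / (1 - ε) ≤ Ec)
    (x : Site d L → ℝ) (hx : ∀ i, 0 ≤ x i) (hxM : ∀ i, x i ≤ Ec)
    (i : Site d L) :
    let y : Site d L → ℝ := fun j => x j + if j = i then 1 else 0
    (∀ n, ((Smat d L Ec ε ((zhangF d L Ec ε)^[n] y)).det
        = ε ^ rhoCount d L Ec ((zhangF d L Ec ε)^[n] y))) ∧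
      (∀ τ : ℕ,
        (((List.range τ).map (fun t => Smat d L Ec ε ((zhangF d L Ec ε)^[t] y))).prod).det
          = ε ^ (∑ t ∈ Finset.range τ, rhoCount d L Ec ((zhangF d L Ec ε)^[t] y))) :=
  zhang_det_S_eq_eps_pow_general d L Ec ε hε0 hε1 hE x hxM i
end
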